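/- Consider the controlled system ẋ₁ = −x₁x₂², ẋ₂ = u on ℝ² with feedback u(x) = −x₂³. Then the closed-loop vector field f(x) = (−x₁x₂², −x₂³) satisfies ⟨x, f(x)⟩ = −x₂²·‖x‖² ≤ 0, and div f(x) = −4x₂² ≤ 0; moreover for ρ(x) = ‖x‖^{2α} with positive integer α and constant β ≥ 1 with α > 2(β−1)/(β+1), one has div(ρ·f)(x) − β·ρ(x)²·div(ρ⁻¹·f)(x) < 0 whenever x₂ ≠ 0. -/

import Mathlib

open scoped BigOperators RealInnerProductSpace

/-- Divergence of a vector field on ℝ². -/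
noncomputable def vdiv (f : EuclideanSpace ℝ (Fin 2) → EuclideanSpace ℝ (Fin 2))
    (x : EuclideanSpace ℝ (Fin 2)) : ℝ :=
  ∑ i, fderiv ℝ f x (EuclideanSpace.single i (1:ℝ)) i

/-- The closed-loop vector field of Example 5 (d = 0) with u = -x₂³. -/
noncomputable def fCL (x : EuclideanSpace ℝ (Fin 2)) : EuclideanSpace ℝ (Fin 2) :=
  (EuclideanSpace.equiv (Fin 2) ℝ).symm ![-(x 0) * (x 1) ^ 2, -(x 1) ^ 3]

/-!
The closed-loop field is radial up to a scalar factor: `fCL x = -x₂² • x`. For a scalar `h`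
that is positively homogeneous of degree `k` along the ray through `x`, Euler's identity
`h' x = k h(x)` gives `div (h • id) x = (2 + k) h(x)` in the plane. Taking `h = -x₂² ρ` and
`h = -x₂² ρ⁻¹`, of degrees `2α + 2` and `2 - 2α`, yields `div (ρ f) = -(2α + 4) x₂² ρ` and
`div (ρ⁻¹ f) = (2α - 4) x₂² ρ⁻¹`, so the combination is `-x₂² ρ (2α + 4 + β (2α - 4))`, which is
negative precisely when `α (β + 1) > 2 (β - 1)`.
-/

local notation "ℝ²" => EuclideanSpace ℝ (Fin 2)

theorem HasFDerivAt.apply_self_eq_of_homogeneous {E : Type*} [NormedAddCommGroup E]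
    [NormedSpace ℝ E] {h : E → ℝ} {h' : E →L[ℝ] ℝ} {x : E} {k : ℝ} (hh : HasFDerivAt h h' x)
    (hom : ∀ t > 0, h (t • x) = t ^ k * h x) : h' x = k * h x := by
  have hray : HasDerivAt (fun t : ℝ => h (t • x)) (h' x) 1 := by
    have hsmul : HasDerivAt (fun t : ℝ => t • x) x 1 := by
      simpa using (hasDerivAt_id (1 : ℝ)).smul_const x
    exact (one_smul ℝ x ▸ hh).comp_hasDerivAt 1 hsmul
  have hpow : HasDerivAt (fun t : ℝ => h (t • x)) (k * h x) 1 := by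
    have := (Real.hasDerivAt_rpow_const (p := k) (Or.inl one_ne_zero)).mul_const (h x)
    simp only [Real.one_rpow, mul_one] at this
    exact this.congr_of_eventuallyEq (eventually_gt_nhds one_pos |>.mono hom)
  exact hray.unique hpow

theorem vdiv_smul_self {h : ℝ² → ℝ} {h' : ℝ² →L[ℝ] ℝ} {x : ℝ²} (hh : HasFDerivAt h h' x) :
    vdiv (fun y => h y • y) x = 2 * h x + h' x := by
  have h'x :
      h' x = x 0 * h' (EuclideanSpace.single 0 1) + x 1 * h' (EuclideanSpace.single 1 1) := by
    have hx : x = x 0 • EuclideanSpace.single 0 1 + x 1 • EuclideanSpace.single 1 1 := by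
      ext i; fin_cases i <;> simp
    conv_lhs => rw [hx]
    simp
  have hd : HasFDerivAt (fun y => h y • y) (h x • .id ℝ ℝ² + h'.smulRight x) x :=
    hh.smul (hasFDerivAt_id x)
  rw [vdiv, hd.fderiv, Fin.sum_univ_two, h'x]
  simp only [add_apply, smul_apply, ContinuousLinearMap.id_apply,
    ContinuousLinearMap.smulRight_apply, PiLp.add_apply, PiLp.smul_apply, PiLp.single_eq_same,
    smul_eq_mul, mul_one]
  ring

theorem vdiv_smul_self_of_homogeneous {h : ℝ² → ℝ} {x : ℝ²} {k : ℝ}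
    (hh : DifferentiableAt ℝ h x) (hom : ∀ t > 0, h (t • x) = t ^ k * h x) :
    vdiv (fun y => h y • y) x = (2 + k) * h x := by
  rw [vdiv_smul_self hh.hasFDerivAt, HasFDerivAt.apply_self_eq_of_homogeneous hh.hasFDerivAt hom]
  ring

theorem fCL_eq_smul (y : ℝ²) : fCL y = (-(y 1) ^ 2) • y := by
  ext i; fin_cases i <;> simp [fCL] <;> ring

theorem vdiv_smul_fCL_of_homogeneous {h : ℝ² → ℝ} {x : ℝ²} {k : ℝ}
    (hh : DifferentiableAt ℝ h x) (hom : ∀ t > 0, h (t • x) = t ^ k * h x) :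
    vdiv (fun y => h y • fCL y) x = (k + 4) * (h x * -(x 1) ^ 2) := by
  have hd : DifferentiableAt ℝ (fun y : ℝ² => h y * -(y 1) ^ 2) x := by fun_prop
  have hom' : ∀ t > 0, h (t • x) * -((t • x) 1) ^ 2 = t ^ (k + 2) * (h x * -(x 1) ^ 2) := by
    intro t ht
    rw [hom t ht, Real.rpow_add ht, PiLp.smul_apply, smul_eq_mul, Real.rpow_two]
    ring
  simp_rw [fCL_eq_smul, smul_smul]
  rw [vdiv_smul_self_of_homogeneous hd hom']
  ring

theorem norm_smul_pow_of_pos {E : Type*} [SeminormedAddCommGroup E] [NormedSpace ℝ E]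
    {t : ℝ} (ht : 0 < t) (x : E) (n : ℕ) : ‖t • x‖ ^ n = t ^ (n : ℝ) * ‖x‖ ^ n := by
  rw [norm_smul, Real.norm_of_nonneg ht.le, mul_pow, Real.rpow_natCast]

theorem example5_closed_loop :
    (∀ x : EuclideanSpace ℝ (Fin 2), ⟪x, fCL x⟫ = -(x 1) ^ 2 * ‖x‖ ^ 2 ∧ ⟪x, fCL x⟫ ≤ 0) ∧
    (∀ x : EuclideanSpace ℝ (Fin 2), vdiv fCL x = -4 * (x 1) ^ 2 ∧ vdiv fCL x ≤ 0) ∧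
    (∀ (α : ℕ) (β : ℝ), 0 < α → 1 ≤ β → (α : ℝ) > 2 * (β - 1) / (β + 1) →
      ∀ x : EuclideanSpace ℝ (Fin 2), x 1 ≠ 0 →
        vdiv (fun y => (‖y‖ ^ (2 * α)) • fCL y) x
          - β * (‖x‖ ^ (2 * α)) ^ 2 * vdiv (fun y => (‖y‖ ^ (2 * α))⁻¹ • fCL y) x < 0) := by
  refine ⟨fun x => ?_, fun x => ?_, ?_⟩
  · have h : ⟪x, fCL x⟫ = -(x 1) ^ 2 * ‖x‖ ^ 2 := by
      rw [fCL_eq_smul, real_inner_smul_right, real_inner_self_eq_norm_sq]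
    exact ⟨h, h ▸ mul_nonpos_of_nonpos_of_nonneg (neg_nonpos.2 (sq_nonneg _)) (sq_nonneg _)⟩
  · have h : vdiv fCL x = -4 * (x 1) ^ 2 := by
      simpa using vdiv_smul_fCL_of_homogeneous (h := fun _ => 1) (k := 0) (x := x)
        (differentiableAt_const _) (by simp)
    exact ⟨h, h ▸ mul_nonpos_of_nonpos_of_nonneg (by norm_num) (sq_nonneg _)⟩
  · intro α β _ hβ hαβ x hx1
    have hx : x ≠ 0 := fun h => hx1 (by simp [h])
    have hnorm : DifferentiableAt ℝ (fun y : ℝ² => ‖y‖ ^ (2 * α)) x :=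
      (differentiableAt_id.norm ℝ hx).pow _
    have hρ : 0 < ‖x‖ ^ (2 * α) := pow_pos (norm_pos_iff.2 hx) _
    have hnorm_inv : DifferentiableAt ℝ (fun y : ℝ² => (‖y‖ ^ (2 * α))⁻¹) x := hnorm.inv hρ.ne'
    rw [vdiv_smul_fCL_of_homogeneous hnorm (fun t ht => norm_smul_pow_of_pos ht x _),
      vdiv_smul_fCL_of_homogeneous hnorm_inv (k := -(2 * α : ℕ)) (fun t ht => by
        rw [norm_smul_pow_of_pos ht, mul_inv, ← Real.rpow_neg ht.le])]
    have hgap : 0 < (2 * α + 4 : ℝ) - β * (4 - 2 * α) := by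
      rw [gt_iff_lt, div_lt_iff₀ (by linarith)] at hαβ
      linarith
    have hx1sq : 0 < x 1 ^ 2 := pow_two_pos_of_ne_zero hx1
    calc _ = -(‖x‖ ^ (2 * α) * x 1 ^ 2 * ((2 * α + 4 : ℝ) - β * (4 - 2 * α))) := by
          field_simp
          push_cast
          ring
      _ < 0 := neg_neg_of_pos (mul_pos (mul_pos hρ hx1sq) hgap)
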